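/- For every behavior policy μ ∈ Λ, every t ∈ {0,…,T−2}, and every state-action pair (s,a), the conditional variance of the future PDIS return given (S_t, A_t) = (s,a) decomposes as: Var(G^PDIS(τ^{μ_{t+1:T−1}}_{t+1:T−1}) | S_t = s, A_t = a) = Σ_{s'} p(s'|s,a)·Var(G^PDIS(τ^{μ_{t+1:T−1}}_{t+1:T−1}) | S_{t+1} = s') + Var_{s'∼p(·|s,a)}(v_{π,t+1}(s')). -/

import Mathlib

open Finset

section MDPDefs

variable {S A : Type} [Fintype S] [Fintype A]

/-- State value `v_{π,t}(s)` of policy `π` for reward `r`, with `n` remaining steps at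
time `t`; the paper's `v_{π,t}(s)` (horizon `T`) is `vval p r π (T − t) t s`. -/
noncomputable def vval (p : S → A → S → ℝ) (r : S → A → ℝ) (π : ℕ → S → A → ℝ) :
    ℕ → ℕ → S → ℝ
  | 0, _, _ => 0
  | n + 1, t, s => ∑ a, π t s a * (r s a + ∑ s', p s a s' * vval p r π n (t + 1) s')

/-- Action value `q_{π,t}(s,a) = r(s,a) + ∑_{s'} p(s'|s,a) v_{π,t+1}(s')`, where `n`
steps remain after the current one; the paper's `q_{π,t}` is `qval p r π (T − t − 1) t`. -/
noncomputable def qval (p : S → A → S → ℝ) (r : S → A → ℝ) (π : ℕ → S → A → ℝ)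
    (n t : ℕ) (s : S) (a : A) : ℝ :=
  r s a + ∑ s', p s a s' * vval p r π n (t + 1) s'

/-- `ν_{π,t}(s,a) = Var_{s' ∼ p(·|s,a)}(v_{π,t+1}(s'))`, with `n = T − t − 1`
remaining steps after the current one (in particular `ν_{π,T−1} ≡ 0` since `v_{π,T} ≡ 0`). -/
noncomputable def nuVar (p : S → A → S → ℝ) (r : S → A → ℝ) (π : ℕ → S → A → ℝ)
    (n t : ℕ) (s : S) (a : A) : ℝ :=
  (∑ s', p s a s' * (vval p r π n (t + 1) s') ^ 2)
    - (∑ s', p s a s' * vval p r π n (t + 1) s') ^ 2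

/-- Probability, under behavior policy `μ`, of the trajectory
`τ = (A_t, S_{t+1}, A_{t+1}, …, S_{t+n})` of `n` steps starting from state `s` at
time `t`: actions `A_k ∼ μ_k(·|S_k)` and states `S_{k+1} ∼ p(·|S_k, A_k)`. -/
noncomputable def trajProb (p : S → A → S → ℝ) (μ : ℕ → S → A → ℝ) :
    (n : ℕ) → ℕ → S → (Fin n → A × S) → ℝ
  | 0, _, _, _ => 1
  | n + 1, t, s, τ =>
      μ t s (τ 0).1 * p s (τ 0).1 (τ 0).2 *
        trajProb p μ n (t + 1) (τ 0).2 (fun i => τ i.succ)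

/-- PDIS return `G^PDIS(τ^{μ_{t:t+n−1}}_{t:t+n−1}) = ∑_{k=t}^{t+n−1} (∏_{j=t}^{k} ρ_j) R_{k+1}`
(in its equivalent recursive form) along trajectory `τ` from state `s` at time `t`,
where `ρ_j = π_j(A_j|S_j)/μ_j(A_j|S_j)` and `R_{k+1} = r(S_k, A_k)`. -/
noncomputable def pdis (r : S → A → ℝ) (π μ : ℕ → S → A → ℝ) :
    (n : ℕ) → ℕ → S → (Fin n → A × S) → ℝ
  | 0, _, _, _ => 0
  | n + 1, t, s, τ =>
      π t s (τ 0).1 / μ t s (τ 0).1 *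
        (r s (τ 0).1 + pdis r π μ n (t + 1) (τ 0).2 (fun i => τ i.succ))

/-- Conditional expectation `E[f(τ) | S_t = s]` over `n`-step trajectories generated
by the behavior policy `μ` from state `s` at time `t`. -/
noncomputable def expTraj (p : S → A → S → ℝ) (μ : ℕ → S → A → ℝ) (n t : ℕ) (s : S)
    (f : (Fin n → A × S) → ℝ) : ℝ :=
  ∑ τ : Fin n → A × S, trajProb p μ n t s τ * f τ

/-- Conditional variance `Var(G^PDIS(τ^{μ_{t:T−1}}_{t:T−1}) | S_t = s)` with
`n = T − t` remaining steps. -/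
noncomputable def pdisVar (p : S → A → S → ℝ) (r : S → A → ℝ) (π μ : ℕ → S → A → ℝ)
    (n t : ℕ) (s : S) : ℝ :=
  expTraj p μ n t s (fun τ => (pdis r π μ n t s τ) ^ 2)
    - (expTraj p μ n t s (pdis r π μ n t s)) ^ 2

/-- Conditional variance `Var(G^PDIS(τ^{μ_{t+1:T−1}}_{t+1:T−1}) | S_t = s, A_t = a)`,
where `S_{t+1} ∼ p(·|s,a)` and then the trajectory is generated by `μ` from `S_{t+1}`;
here `n = T − t − 1`. -/
noncomputable def pdisVarSA (p : S → A → S → ℝ) (r : S → A → ℝ) (π μ : ℕ → S → A → ℝ)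
    (n t : ℕ) (s : S) (a : A) : ℝ :=
  (∑ s', p s a s' * expTraj p μ n (t + 1) s' (fun τ => (pdis r π μ n (t + 1) s' τ) ^ 2))
    - (∑ s', p s a s' * expTraj p μ n (t + 1) s' (pdis r π μ n (t + 1) s')) ^ 2

/-- Extended reward `r̃_t(s,a)` (horizon `T`) computed with continuation behavior
policy `μ`: `r̃_{T−1}(s,a) = r(s,a)²`, and for `t ≤ T−2`,
`r̃_t(s,a) = ν_{π,t}(s,a) + q_{π,t}(s,a)² + ∑_{s'} p(s'|s,a) Var(G^PDIS(τ^{μ_{t+1:T−1}}) | S_{t+1} = s')`. -/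
noncomputable def rtilde (p : S → A → S → ℝ) (r : S → A → ℝ) (π μ : ℕ → S → A → ℝ)
    (T t : ℕ) (s : S) (a : A) : ℝ :=
  if t + 1 = T then (r s a) ^ 2
  else
    nuVar p r π (T - t - 1) t s a + (qval p r π (T - t - 1) t s a) ^ 2
      + ∑ s', p s a s' * pdisVar p r π μ (T - t - 1) (t + 1) s'

/-- Total (unconditional) variance `Var(G^PDIS(τ^{μ_{0:T−1}}_{0:T−1}))` of the PDIS
estimator, including the randomness of the initial state `S_0 ∼ p0`. -/
noncomputable def pdisTotalVar (p : S → A → S → ℝ) (r : S → A → ℝ) (π μ : ℕ → S → A → ℝ)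
    (p0 : S → ℝ) (T : ℕ) : ℝ :=
  (∑ s, p0 s * expTraj p μ T 0 s (fun τ => (pdis r π μ T 0 s τ) ^ 2))
    - (∑ s, p0 s * expTraj p μ T 0 s (pdis r π μ T 0 s)) ^ 2

/-- Feasible set of the step-wise constrained problem at time `t` and state `s`:
probability distributions `ν` on `A` satisfying the coverage condition
`ν a = 0 → π_t(a|s) q_{π,t}(s,a) = 0` and the safety constraint
`∑ a, ν a * q^c_{μ*,t}(s,a) ≤ (1 + ε) v^c_{π,t}(s)`. -/
noncomputable def stepFeasible (p : S → A → S → ℝ) (r c : S → A → ℝ)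
    (π μstar : ℕ → S → A → ℝ) (T : ℕ) (ε : ℝ) (t : ℕ) (s : S) : Set (A → ℝ) :=
  {ν | (∀ a, 0 ≤ ν a) ∧ (∑ a, ν a) = 1 ∧
    (∀ a, ν a = 0 → π t s a * qval p r π (T - t - 1) t s a = 0) ∧
    (∑ a, ν a * qval p c μstar (T - t - 1) t s a) ≤ (1 + ε) * vval p c π (T - t) t s}

/-- Objective `∑_{a : ν a > 0} π_t(a|s)² r̃_t(s,a) / ν a` of the step-wise constrained
problem at time `t` and state `s`, where `r̃_t` is computed with continuation policy
`μ*_{t+1:T−1}`. -/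
noncomputable def stepObj (p : S → A → S → ℝ) (r : S → A → ℝ) (π μstar : ℕ → S → A → ℝ)
    (T t : ℕ) (s : S) (ν : A → ℝ) : ℝ :=
  ∑ a ∈ Finset.univ.filter (fun a => 0 < ν a),
    (π t s a) ^ 2 * rtilde p r π μstar T t s a / ν a

end MDPDefs

/-! Conditioning on `S_{t+1}`, the law of total variance splits the variance of the future
return into the mean conditional variance plus the variance of the conditional mean; the
conditional mean of the PDIS return from `S_{t+1}` is `v_{π,t+1}(S_{t+1})` because PDIS is
unbiased whenever `μ ∈ Λ`. -/

section PDIS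

variable {S A : Type} [Fintype S] [Fintype A]

lemma mul_div_mul_eq_of_eq_zero_imp {μ π q : ℝ} (hcov : μ = 0 → π * q = 0) :
    μ * (π / μ * q) = π * q := by
  by_cases hμ : μ = 0
  · simp [hμ, hcov hμ]
  · field_simp

lemma law_of_total_variance_sum {ι : Type*} [Fintype ι] (w e m : ι → ℝ) :
    (∑ i, w i * e i) - (∑ i, w i * m i) ^ 2
      = (∑ i, w i * (e i - m i ^ 2)) + ((∑ i, w i * m i ^ 2) - (∑ i, w i * m i) ^ 2) := by
  simp only [mul_sub, Finset.sum_sub_distrib]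
  ring

lemma vval_succ (p : S → A → S → ℝ) (r : S → A → ℝ) (π : ℕ → S → A → ℝ) (n t : ℕ) (s : S) :
    vval p r π (n + 1) t s = ∑ a, π t s a * qval p r π n t s a :=
  rfl

lemma qval_eq_sum (p : S → A → S → ℝ) (r : S → A → ℝ) (π : ℕ → S → A → ℝ) (n t : ℕ)
    (s : S) (a : A) (hp : ∑ s', p s a s' = 1) :
    qval p r π n t s a = ∑ s', p s a s' * (r s a + vval p r π n (t + 1) s') := by
  simp only [qval, mul_add, Finset.sum_add_distrib, ← Finset.sum_mul, hp, one_mul]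

lemma expTraj_succ (p : S → A → S → ℝ) (μ : ℕ → S → A → ℝ) (n t : ℕ) (s : S)
    (f : (Fin (n + 1) → A × S) → ℝ) :
    expTraj p μ (n + 1) t s f
      = ∑ a, ∑ s', μ t s a * p s a s' *
          expTraj p μ n (t + 1) s' (fun τ => f (Fin.cons (a, s') τ)) := by
  unfold expTraj
  rw [← (Fin.consEquiv (fun _ : Fin (n + 1) => A × S)).sum_comp, Fintype.sum_prod_type,
    Fintype.sum_prod_type]
  simp only [Fin.consEquiv_apply, trajProb, Fin.cons_zero, Fin.cons_succ, Finset.mul_sum,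
    mul_assoc]
  rfl

variable {p : S → A → S → ℝ} {μ : ℕ → S → A → ℝ}

lemma expTraj_const_one (hp : ∀ s a, ∑ s', p s a s' = 1) (hμ : ∀ t s, ∑ a, μ t s a = 1)
    (n t : ℕ) (s : S) : expTraj p μ n t s (fun _ => 1) = 1 := by
  induction n generalizing t s with
  | zero => simp [expTraj, trajProb]
  | succ n ih =>
    simp only [expTraj_succ, ih, mul_one, ← Finset.mul_sum, hp, hμ]

lemma expTraj_const_mul_add (hp : ∀ s a, ∑ s', p s a s' = 1)
    (hμ : ∀ t s, ∑ a, μ t s a = 1) (n t : ℕ) (s : S) (c d : ℝ)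
    (f : (Fin n → A × S) → ℝ) :
    expTraj p μ n t s (fun τ => c * (d + f τ)) = c * (d + expTraj p μ n t s f) := by
  have hmass := expTraj_const_one hp hμ n t s
  simp only [expTraj] at hmass ⊢
  simp only [mul_one] at hmass
  calc ∑ τ, trajProb p μ n t s τ * (c * (d + f τ))
      = ∑ τ, (c * d * trajProb p μ n t s τ + c * (trajProb p μ n t s τ * f τ)) :=
        Finset.sum_congr rfl fun τ _ => by ring
    _ = c * (d + ∑ τ, trajProb p μ n t s τ * f τ) := by
        rw [Finset.sum_add_distrib, ← Finset.mul_sum, ← Finset.mul_sum, hmass]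
        ring

/-- The coverage condition makes `μ · (π / μ)` equal to `π` on every action that contributes
to `v_π`, so each step reproduces the Bellman recursion. -/
lemma expTraj_pdis_eq_vval (r : S → A → ℝ) (π : ℕ → S → A → ℝ) (T : ℕ)
    (hp : ∀ s a, ∑ s', p s a s' = 1) (hμ : ∀ t s, ∑ a, μ t s a = 1)
    (hΛ : ∀ t, t < T → ∀ s a, μ t s a = 0 → π t s a * qval p r π (T - t - 1) t s a = 0)
    (n t : ℕ) (hnt : n + t = T) (s : S) :
    expTraj p μ n t s (pdis r π μ n t s) = vval p r π n t s := by
  induction n generalizing t s with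
  | zero => simp [expTraj, pdis, vval]
  | succ n ih =>
    have hcov : ∀ a, μ t s a = 0 → π t s a * qval p r π n t s a = 0 := by
      have hn : T - t - 1 = n := by omega
      simpa only [hn] using hΛ t (by omega) s
    rw [expTraj_succ, vval_succ]
    refine Finset.sum_congr rfl fun a _ => ?_
    have hstep : ∀ s', expTraj p μ n (t + 1) s'
        (fun τ => pdis r π μ (n + 1) t s (Fin.cons (a, s') τ))
          = π t s a / μ t s a * (r s a + vval p r π n (t + 1) s') := fun s' => by
      simp only [pdis, Fin.cons_zero, Fin.cons_succ]
      rw [expTraj_const_mul_add hp hμ, ih (t + 1) (by omega)]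
    calc ∑ s', μ t s a * p s a s' * expTraj p μ n (t + 1) s'
            (fun τ => pdis r π μ (n + 1) t s (Fin.cons (a, s') τ))
        = μ t s a * (π t s a / μ t s a *
            ∑ s', p s a s' * (r s a + vval p r π n (t + 1) s')) := by
          simp only [hstep, Finset.mul_sum]
          exact Finset.sum_congr rfl fun s' _ => by ring
      _ = π t s a * qval p r π n t s a := by
          rw [← qval_eq_sum p r π n t s a (hp s a), mul_div_mul_eq_of_eq_zero_imp (hcov a)]

end PDIS

theorem pdis_variance_next_state_decomposition_general
    {S A : Type} [Fintype S] [Fintype A]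
    (T : ℕ)
    (p : S → A → S → ℝ) (r : S → A → ℝ) (π μ : ℕ → S → A → ℝ)
    (hp : ∀ s a, (∀ s', 0 ≤ p s a s') ∧ (∑ s', p s a s') = 1)
    (hμ : ∀ t s, (∀ a, 0 ≤ μ t s a) ∧ (∑ a, μ t s a) = 1)
    (hΛ : ∀ t, t < T → ∀ s a, μ t s a = 0 → π t s a * qval p r π (T - t - 1) t s a = 0) :
    ∀ t, t + 1 < T → ∀ (s : S) (a : A),
      pdisVarSA p r π μ (T - t - 1) t s a
        = (∑ s', p s a s' * pdisVar p r π μ (T - t - 1) (t + 1) s')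
          + nuVar p r π (T - t - 1) t s a := by
  intro t ht s a
  have hmean : ∀ s', expTraj p μ (T - t - 1) (t + 1) s' (pdis r π μ (T - t - 1) (t + 1) s')
      = vval p r π (T - t - 1) (t + 1) s' :=
    expTraj_pdis_eq_vval r π T (fun s a => (hp s a).2) (fun t s => (hμ t s).2) hΛ
      (T - t - 1) (t + 1) (by omega)
  unfold pdisVarSA pdisVar nuVar
  simp only [hmean]
  exact law_of_total_variance_sum _ _ _

/-- **Law of total variance over the next state.**
For every behavior policy `μ ∈ Λ`, every `t ∈ {0,…,T−2}` and every state-action pair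
`(s,a)`, the conditional variance of the future PDIS return given `(S_t, A_t) = (s,a)`
decomposes as
`Var(G^PDIS(τ^{μ_{t+1:T−1}}) | S_t = s, A_t = a)
  = ∑_{s'} p(s'|s,a) Var(G^PDIS(τ^{μ_{t+1:T−1}}) | S_{t+1} = s')
    + Var_{s' ∼ p(·|s,a)}(v_{π,t+1}(s'))`. -/
theorem pdis_variance_next_state_decomposition
    {S A : Type} [Fintype S] [Fintype A]
    (T : ℕ) (hT : 1 ≤ T)
    (p : S → A → S → ℝ) (r : S → A → ℝ) (π μ : ℕ → S → A → ℝ)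
    (hp : ∀ s a, (∀ s', 0 ≤ p s a s') ∧ (∑ s', p s a s') = 1)
    (hπ : ∀ t s, (∀ a, 0 ≤ π t s a) ∧ (∑ a, π t s a) = 1)
    (hμ : ∀ t s, (∀ a, 0 ≤ μ t s a) ∧ (∑ a, μ t s a) = 1)
    (hΛ : ∀ t, t < T → ∀ s a, μ t s a = 0 → π t s a * qval p r π (T - t - 1) t s a = 0) :
    ∀ t, t + 1 < T → ∀ (s : S) (a : A),
      pdisVarSA p r π μ (T - t - 1) t s a
        = (∑ s', p s a s' * pdisVar p r π μ (T - t - 1) (t + 1) s')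
          + nuVar p r π (T - t - 1) t s a :=
  pdis_variance_next_state_decomposition_general T p r π μ hp hμ hΛ
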